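/- Let p ∈ (1,∞) and a > 0. The function g(t) = ∫_t^a H_a(w)^{−1/2} dw is finite for every t ∈ [0,a], continuous and strictly decreasing on [0,a], with g(a) = 0 and g(0) = θ_a. Its inverse function y : [0, θ_a] → [0, a] is continuous and strictly decreasing and satisfies y(0) = a, y(θ_a) = 0, y > 0 on [0, θ_a), and y'(θ) = −√(H_a(y(θ))) for every θ ∈ (0, θ_a). -/

import Mathlib

/-!
Two lower bounds on `G_a` come out of the ODE. On `[y₀, 1]` we have `0 ≤ G_a ≤ G_a(y₀)`, which
gives `F_a(y, G_a(y)) ≥ m` for some `m > 0`, so `G_a(y) ≥ m (1 - y)` there. For every `w ≥ 0`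
one has `F_a(y, w) ≥ w / y`, so `(y G_a(y))' = G_a - y F_a ≤ 0` and `y G_a(y)` stays bounded
below near `0`. Hence `H_a(w) ≥ c w (a - w)` on `(0, a)`, and since
`1 / √(w (a - w)) ≤ (w^{-1/2} + (a - w)^{-1/2}) / √a`, the function `H_a^{-1/2}` is integrable.

Then `g` is a primitive of the positive continuous function `-H_a^{-1/2}` on `(0, a)`, hence
strictly decreasing; its inverse on `[0, θ_a]` is continuous because `[0, a]` is compact, and the
inverse function theorem gives `y' = 1 / g'(y) = -√(H_a(y))`.
-/

open Set Real Filter MeasureTheory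

/-- `F_a(y,w)` from the paper (with parameter `p`). -/
noncomputable def Fa (p a y w : ℝ) : ℝ :=
  (8*p*(1/a + 2*y) + (2*p/a + 4*(3*p - 2)*y + 2*(p - 1)*y*w)*w) / (y^2 * (4 + (p - 1)*w))

/-- `G` is the family `a ↦ G_a` of solutions of `G_a' = -F_a(y, G_a)` on `(0,1)`
with `G_a(1) = 0`: each `G_a` is continuous on `(0,1]`, positive on `(0,1)` and
strictly decreasing on `(0,1]`. -/
def IsGFamily (p : ℝ) (G : ℝ → ℝ → ℝ) : Prop :=
  ∀ a : ℝ, 0 < a →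
    ContinuousOn (G a) (Set.Ioc 0 1) ∧
    G a 1 = 0 ∧
    (∀ y ∈ Set.Ioo (0:ℝ) 1, HasDerivAt (G a) (-(Fa p a y (G a y))) y) ∧
    (∀ y ∈ Set.Ioo (0:ℝ) 1, 0 < G a y) ∧
    StrictAntiOn (G a) (Set.Ioc 0 1)

/-- `H_a(y) = y² G_a(y/a)`. -/
noncomputable def Ha (G : ℝ → ℝ → ℝ) (a y : ℝ) : ℝ := y^2 * G a (y/a)

/-- `g(t) = ∫_t^a H_a(w)^{-1/2} dw`. -/
noncomputable def gfun (G : ℝ → ℝ → ℝ) (a t : ℝ) : ℝ :=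
  ∫ w in Set.Ioo t a, (Real.sqrt (Ha G a w))⁻¹

/-- `θ_a = ∫_0^a H_a(w)^{-1/2} dw`. -/
noncomputable def thetaA (G : ℝ → ℝ → ℝ) (a : ℝ) : ℝ := gfun G a 0

open Function Topology

lemma antitoneOn_of_hasDerivAt_nonpos {D : Set ℝ} (hD : Convex ℝ D) {f f' : ℝ → ℝ}
    (hf : ContinuousOn f D) (hf' : ∀ x ∈ interior D, HasDerivAt f (f' x) x)
    (hf'₀ : ∀ x ∈ interior D, f' x ≤ 0) : AntitoneOn f D :=
  antitoneOn_of_hasDerivWithinAt_nonpos hD hf (fun x hx ↦ (hf' x hx).hasDerivWithinAt) hf'₀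

lemma IsCompact.continuousOn_invFunOn {X Y : Type*} [TopologicalSpace X] [TopologicalSpace Y]
    [T2Space Y] [Nonempty X] {s : Set X} {g : X → Y} (hs : IsCompact s) (hg : ContinuousOn g s)
    (hinj : InjOn g s) : ContinuousOn (invFunOn g s) (g '' s) := by
  refine continuousOn_iff_isClosed.2 fun C hC ↦
    ⟨g '' (C ∩ s), ((hs.inter_left hC).image_of_continuousOn (hg.mono inter_subset_right)).isClosed,
      ?_⟩
  ext x
  constructor
  · rintro ⟨hx, z, hz, rfl⟩
    exact ⟨⟨z, ⟨by rwa [← hinj.leftInvOn_invFunOn hz], hz⟩, rfl⟩, z, hz, rfl⟩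
  · rintro ⟨⟨w, ⟨hwC, hws⟩, rfl⟩, hx⟩
    exact ⟨show invFunOn g s (g w) ∈ C by rwa [hinj.leftInvOn_invFunOn hws], hx⟩

lemma StrictAntiOn.exists_invOn_Icc {g : ℝ → ℝ} {a b : ℝ} (hab : a ≤ b)
    (hc : ContinuousOn g (Icc a b)) (hg : StrictAntiOn g (Icc a b)) :
    ∃ y : ℝ → ℝ, ContinuousOn y (Icc (g b) (g a)) ∧ StrictAntiOn y (Icc (g b) (g a)) ∧
      MapsTo y (Icc (g b) (g a)) (Icc a b) ∧ (∀ t ∈ Icc a b, y (g t) = t) ∧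
      ∀ s ∈ Icc (g b) (g a), g (y s) = s := by
  have himage := hc.image_Icc_of_antitoneOn hab hg.antitoneOn
  have hsurj : SurjOn g (Icc a b) (Icc (g b) (g a)) := himage.symm.subset
  have hright : ∀ s ∈ Icc (g b) (g a), g (invFunOn g (Icc a b) s) = s :=
    fun s hs ↦ hsurj.rightInvOn_invFunOn hs
  have hmaps : MapsTo (invFunOn g (Icc a b)) (Icc (g b) (g a)) (Icc a b) :=
    fun s hs ↦ invFunOn_mem (hsurj hs)
  refine ⟨invFunOn g (Icc a b), himage ▸ isCompact_Icc.continuousOn_invFunOn hc hg.injOn,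
    fun s hs s' hs' hss' ↦ ?_, hmaps, fun t ht ↦ hg.injOn.leftInvOn_invFunOn ht, hright⟩
  rwa [← hg.lt_iff_gt (hmaps hs) (hmaps hs'), hright s hs, hright s' hs']

section Primitive

variable {f : ℝ → ℝ} {a b : ℝ}

lemma setIntegral_Ioo_eq_intervalIntegral {t : ℝ} (ht : t ≤ b) :
    ∫ w in Ioo t b, f w = ∫ w in t..b, f w := by
  rw [intervalIntegral.integral_of_le ht, integral_Ioc_eq_integral_Ioo]

lemma continuousOn_setIntegral_Ioo_left (hab : a ≤ b) (hint : IntegrableOn f (Ioo a b)) :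
    ContinuousOn (fun t ↦ ∫ w in Ioo t b, f w) (Icc a b) := by
  have hIcc : IntegrableOn f (uIcc a b) := by
    rwa [uIcc_of_le hab, integrableOn_Icc_iff_integrableOn_Ioo]
  have := intervalIntegral.continuousOn_primitive_interval_left hIcc
  rw [uIcc_of_le hab] at this
  exact this.congr fun t ht ↦ setIntegral_Ioo_eq_intervalIntegral ht.2

lemma hasDerivAt_setIntegral_Ioo_left (hf : ContinuousOn f (Ioo a b))
    (hint : IntegrableOn f (Ioo a b)) {t : ℝ} (ht : t ∈ Ioo a b) :
    HasDerivAt (fun t ↦ ∫ w in Ioo t b, f w) (-f t) t := by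
  have hii : IntervalIntegrable f volume t b :=
    (intervalIntegrable_iff_integrableOn_Ioo_of_le ht.2.le).2
      (hint.mono_set (Ioo_subset_Ioo_left ht.1.le))
  refine (intervalIntegral.integral_hasDerivAt_left hii
    (hf.stronglyMeasurableAtFilter isOpen_Ioo t ht)
    (hf.continuousAt (Ioo_mem_nhds ht.1 ht.2))).congr_of_eventuallyEq ?_
  filter_upwards [Iio_mem_nhds ht.2] with u hu
  exact setIntegral_Ioo_eq_intervalIntegral hu.le

lemma strictAntiOn_setIntegral_Ioo_left (hab : a ≤ b) (hf : ContinuousOn f (Ioo a b))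
    (hpos : ∀ x ∈ Ioo a b, 0 < f x) (hint : IntegrableOn f (Ioo a b)) :
    StrictAntiOn (fun t ↦ ∫ w in Ioo t b, f w) (Icc a b) := by
  refine strictAntiOn_of_deriv_neg (convex_Icc a b) (continuousOn_setIntegral_Ioo_left hab hint)
    fun t ht ↦ ?_
  rw [interior_Icc] at ht
  rw [(hasDerivAt_setIntegral_Ioo_left hf hint ht).deriv, neg_lt_zero]
  exact hpos t ht

end Primitive

lemma inv_sqrt_mul_le {u v : ℝ} (hu : 0 < u) (hv : 0 < v) :
    (√(u * v))⁻¹ ≤ (√(u + v))⁻¹ * ((√u)⁻¹ + (√v)⁻¹) := by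
  have hsu := sqrt_pos.2 hu
  have hsv := sqrt_pos.2 hv
  have hsum : √(u + v) ≤ √u + √v := by
    rw [sqrt_le_left (by positivity)]
    nlinarith [sq_sqrt hu.le, sq_sqrt hv.le, mul_pos hsu hsv]
  rw [sqrt_mul hu.le, inv_add_inv hsu.ne' hsv.ne', ← div_eq_inv_mul, le_div_iff₀ (by positivity),
    inv_mul_eq_div]
  exact div_le_div_of_nonneg_right hsum (by positivity)

lemma integrableOn_inv_sqrt_Ioo {a : ℝ} (ha : 0 < a) : IntegrableOn (fun w ↦ (√w)⁻¹) (Ioo 0 a) :=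
  ((intervalIntegral.integrableOn_Ioo_rpow_iff ha).2 (by norm_num : (-1 : ℝ) < -(1 / 2))).congr_fun
    (fun w hw ↦ by rw [sqrt_eq_rpow, ← rpow_neg hw.1.le]) measurableSet_Ioo

lemma integrableOn_inv_sqrt_sub_Ioo {a : ℝ} (ha : 0 < a) :
    IntegrableOn (fun w ↦ (√(a - w))⁻¹) (Ioo 0 a) := by
  have := ((intervalIntegrable_iff_integrableOn_Ioo_of_le ha.le).2
    (integrableOn_inv_sqrt_Ioo ha)).comp_sub_left a
  rw [sub_zero, sub_self] at this
  exact (intervalIntegrable_iff_integrableOn_Ioo_of_le ha.le).1 this.symm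

lemma integrableOn_inv_sqrt_of_mul_le {h : ℝ → ℝ} {a c : ℝ} (ha : 0 < a) (hc : 0 < c)
    (hh : ContinuousOn h (Ioo 0 a)) (hle : ∀ w ∈ Ioo 0 a, c * (w * (a - w)) ≤ h w) :
    IntegrableOn (fun w ↦ (√(h w))⁻¹) (Ioo 0 a) := by
  have hpos : ∀ w ∈ Ioo 0 a, 0 < c * (w * (a - w)) := fun w hw ↦
    mul_pos hc (mul_pos hw.1 (sub_pos.2 hw.2))
  have hmeas : ContinuousOn (fun w ↦ (√(h w))⁻¹) (Ioo 0 a) :=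
    hh.sqrt.inv₀ fun w hw ↦ (sqrt_pos.2 ((hpos w hw).trans_le (hle w hw))).ne'
  refine Integrable.mono' ((((integrableOn_inv_sqrt_Ioo ha).add
      (integrableOn_inv_sqrt_sub_Ioo ha)).const_mul ((√c)⁻¹ * (√a)⁻¹)))
    (hmeas.aestronglyMeasurable measurableSet_Ioo) ?_
  rw [ae_restrict_iff' measurableSet_Ioo]
  refine Eventually.of_forall fun w hw ↦ ?_
  rw [norm_of_nonneg (inv_nonneg.2 (sqrt_nonneg _))]
  calc (√(h w))⁻¹ ≤ (√(c * (w * (a - w))))⁻¹ :=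
        inv_anti₀ (sqrt_pos.2 (hpos w hw)) (sqrt_le_sqrt (hle w hw))
    _ = (√c)⁻¹ * (√(w * (a - w)))⁻¹ := by rw [sqrt_mul hc.le, mul_inv]
    _ ≤ (√c)⁻¹ * ((√(w + (a - w)))⁻¹ * ((√w)⁻¹ + (√(a - w))⁻¹)) := by
        gcongr
        exact inv_sqrt_mul_le hw.1 (sub_pos.2 hw.2)
    _ = (√c)⁻¹ * (√a)⁻¹ * ((√w)⁻¹ + (√(a - w))⁻¹) := by rw [add_sub_cancel, mul_assoc]

section Fa

variable {p a y w : ℝ}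

lemma le_Fa_of_le {B : ℝ} (hp : 1 ≤ p) (ha : 0 ≤ a) (hy : 0 < y) (hw : 0 ≤ w) (hwB : w ≤ B) :
    8 * p / a / (4 + (p - 1) * B) / y ^ 2 ≤ Fa p a y w := by
  have hp1 : 0 ≤ p - 1 := by linarith
  have hQ : 0 ≤ 2 * p / a + 4 * (3 * p - 2) * y + 2 * (p - 1) * y * w := by
    have : 0 ≤ 2 * p / a := by positivity
    nlinarith [mul_nonneg (mul_nonneg hp1 hy.le) hw]
  have hN : 8 * p / a ≤
      8 * p * (1 / a + 2 * y) + (2 * p / a + 4 * (3 * p - 2) * y + 2 * (p - 1) * y * w) * w := by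
    have : 8 * p * (1 / a + 2 * y) = 8 * p / a + 16 * p * y := by ring
    nlinarith [mul_nonneg hQ hw, mul_nonneg (zero_le_one.trans hp) hy.le]
  calc 8 * p / a / (4 + (p - 1) * B) / y ^ 2 = 8 * p / a / (y ^ 2 * (4 + (p - 1) * B)) := by
        rw [div_div, mul_comm (4 + _)]
    _ ≤ 8 * p / a / (y ^ 2 * (4 + (p - 1) * w)) := by gcongr
    _ ≤ Fa p a y w := by rw [Fa]; gcongr

lemma div_le_Fa (hp : 1 ≤ p) (ha : 0 ≤ a) (hy : 0 < y) (hw : 0 ≤ w) :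
    w / y ≤ Fa p a y w := by
  have hp1 : 0 ≤ p - 1 := by linarith
  have hN : w * y * (4 + (p - 1) * w) ≤
      8 * p * (1 / a + 2 * y) + (2 * p / a + 4 * (3 * p - 2) * y + 2 * (p - 1) * y * w) * w := by
    have hp0 : 0 ≤ p := by linarith
    have hdiff :
        8 * p * (1 / a + 2 * y) + (2 * p / a + 4 * (3 * p - 2) * y + 2 * (p - 1) * y * w) * w
          - w * y * (4 + (p - 1) * w)
        = 8 * (p / a) + 16 * p * y + 2 * (p / a) * w + 12 * (p - 1) * y * w
          + (p - 1) * y * w ^ 2 := by ring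
    have hsum : 0 ≤ 8 * (p / a) + 16 * p * y + 2 * (p / a) * w + 12 * (p - 1) * y * w
          + (p - 1) * y * w ^ 2 := by positivity
    linarith
  rw [Fa, div_le_div_iff₀ hy (by positivity)]
  calc w * (y ^ 2 * (4 + (p - 1) * w)) = w * y * (4 + (p - 1) * w) * y := by ring
    _ ≤ _ := by gcongr

end Fa

structure IsGSolution (p a : ℝ) (g : ℝ → ℝ) : Prop where
  continuousOn : ContinuousOn g (Ioc 0 1)
  map_one : g 1 = 0
  hasDerivAt : ∀ y ∈ Ioo (0 : ℝ) 1, HasDerivAt g (-(Fa p a y (g y))) y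
  pos : ∀ y ∈ Ioo (0 : ℝ) 1, 0 < g y
  strictAntiOn : StrictAntiOn g (Ioc 0 1)

lemma IsGFamily.isGSolution {p : ℝ} {G : ℝ → ℝ → ℝ} (hG : IsGFamily p G) {a : ℝ} (ha : 0 < a) :
    IsGSolution p a (G a) :=
  let ⟨h₁, h₂, h₃, h₄, h₅⟩ := hG a ha
  ⟨h₁, h₂, h₃, h₄, h₅⟩

namespace IsGSolution

variable {p a : ℝ} {g : ℝ → ℝ}

lemma nonneg (hg : IsGSolution p a g) {y : ℝ} (hy : y ∈ Ioc 0 1) : 0 ≤ g y :=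
  hg.map_one ▸ hg.strictAntiOn.antitoneOn hy (right_mem_Ioc.2 one_pos) hy.2

lemma exists_mul_one_sub_le (hg : IsGSolution p a g) (hp : 1 ≤ p) (ha : 0 < a) {y₀ : ℝ}
    (hy₀ : y₀ ∈ Ioc 0 1) : ∃ m > 0, ∀ y ∈ Icc y₀ 1, m * (1 - y) ≤ g y := by
  have hgy₀ := hg.nonneg hy₀
  have hp1 : 0 ≤ p - 1 := by linarith
  set m := 8 * p / a / (4 + (p - 1) * g y₀)
  have hm : 0 < m := by positivity
  have hsub : Icc y₀ 1 ⊆ Ioc 0 1 := fun x hx ↦ ⟨hy₀.1.trans_le hx.1, hx.2⟩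
  have hanti : AntitoneOn (fun y ↦ g y + m * y) (Icc y₀ 1) := by
    refine antitoneOn_of_hasDerivAt_nonpos (convex_Icc _ _)
      ((hg.continuousOn.mono hsub).add (continuousOn_const.mul continuousOn_id))
      (f' := fun x ↦ -Fa p a x (g x) + m * 1) (fun x hx ↦ ?_) (fun x hx ↦ ?_) <;>
      rw [interior_Icc] at hx <;> have hx' : x ∈ Ioo 0 1 := ⟨hy₀.1.trans hx.1, hx.2⟩
    · exact (hg.hasDerivAt x hx').add ((hasDerivAt_id' x).const_mul m)
    · have hF := le_Fa_of_le hp ha.le hx'.1 (hg.pos x hx').le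
        (hg.strictAntiOn.antitoneOn hy₀ (hsub (Ioo_subset_Icc_self hx)) hx.1.le)
      have : m ≤ m / x ^ 2 := le_div_self hm.le (pow_pos hx'.1 2) (by nlinarith [hx'.1, hx'.2])
      linarith
  refine ⟨m, hm, fun y hy ↦ ?_⟩
  have := hanti hy (right_mem_Icc.2 hy₀.2) hy.2
  simp only [hg.map_one] at this
  linarith

lemma antitoneOn_id_mul (hg : IsGSolution p a g) (hp : 1 ≤ p) (ha : 0 ≤ a) :
    AntitoneOn (fun y ↦ y * g y) (Ioc 0 1) := by
  refine antitoneOn_of_hasDerivAt_nonpos (convex_Ioc _ _) (continuousOn_id.mul hg.continuousOn)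
    (f' := fun x ↦ 1 * g x + x * -Fa p a x (g x)) (fun x hx ↦ ?_) (fun x hx ↦ ?_) <;>
    rw [interior_Ioc] at hx
  · exact (hasDerivAt_id' x).mul (hg.hasDerivAt x hx)
  · have := (div_le_iff₀ hx.1).1 (div_le_Fa hp ha hx.1 (hg.pos x hx).le)
    linarith

lemma exists_mul_one_sub_le_mul (hg : IsGSolution p a g) (hp : 1 ≤ p) (ha : 0 < a) :
    ∃ c > 0, ∀ y ∈ Ioo (0 : ℝ) 1, c * (1 - y) ≤ y * g y := by
  have hhalf : (2⁻¹ : ℝ) ∈ Ioo 0 1 := by norm_num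
  obtain ⟨m, hm, hlin⟩ := hg.exists_mul_one_sub_le hp ha (Ioo_subset_Ioc_self hhalf)
  have hK : 0 < 2⁻¹ * g 2⁻¹ := mul_pos (by norm_num) (hg.pos _ hhalf)
  refine ⟨min (2⁻¹ * g 2⁻¹) (2⁻¹ * m), lt_min hK (by positivity), fun y hy ↦ ?_⟩
  have h1y : 0 ≤ 1 - y := by linarith [hy.2]
  rcases le_total y 2⁻¹ with h | h
  · calc min (2⁻¹ * g 2⁻¹) (2⁻¹ * m) * (1 - y) ≤ 2⁻¹ * g 2⁻¹ * 1 :=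
          mul_le_mul (min_le_left _ _) (by linarith [hy.1]) h1y hK.le
      _ ≤ y * g y := by
          rw [mul_one]
          exact hg.antitoneOn_id_mul hp ha.le (Ioo_subset_Ioc_self hy)
            (Ioo_subset_Ioc_self hhalf) h
  · calc min (2⁻¹ * g 2⁻¹) (2⁻¹ * m) * (1 - y) ≤ 2⁻¹ * (m * (1 - y)) := by
          rw [← mul_assoc]; gcongr; exact min_le_right _ _
      _ ≤ y * g y :=
          mul_le_mul h (hlin y ⟨h, hy.2.le⟩) (by positivity) hy.1.le

end IsGSolution

section Ha

variable {p a : ℝ} {G : ℝ → ℝ → ℝ}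

lemma IsGSolution.continuousOn_Ha (hg : IsGSolution p a (G a)) (ha : 0 < a) :
    ContinuousOn (Ha G a) (Ioo 0 a) :=
  (continuousOn_pow 2).mul <| hg.continuousOn.comp (continuousOn_id.div_const a)
    fun _ hw ↦ ⟨div_pos hw.1 ha, (div_le_one ha).2 hw.2.le⟩

lemma IsGSolution.exists_mul_le_Ha (hg : IsGSolution p a (G a)) (hp : 1 ≤ p) (ha : 0 < a) :
    ∃ c > 0, ∀ w ∈ Ioo 0 a, c * (w * (a - w)) ≤ Ha G a w := by
  obtain ⟨c, hc, hle⟩ := hg.exists_mul_one_sub_le_mul hp ha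
  refine ⟨c, hc, fun w hw ↦ ?_⟩
  calc c * (w * (a - w)) = a * w * (c * (1 - w / a)) := by field_simp
    _ ≤ a * w * (w / a * G a (w / a)) :=
        mul_le_mul_of_nonneg_left (hle _ ⟨div_pos hw.1 ha, (div_lt_one ha).2 hw.2⟩)
          (mul_pos ha hw.1).le
    _ = Ha G a w := by rw [Ha]; field_simp

end Ha

theorem g_and_inverse_properties (p a : ℝ) (hp : 1 < p) (ha : 0 < a)
    (G : ℝ → ℝ → ℝ) (hG : IsGFamily p G) :
    MeasureTheory.IntegrableOn (fun w => (Real.sqrt (Ha G a w))⁻¹) (Set.Ioo 0 a) ∧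
    ContinuousOn (gfun G a) (Set.Icc 0 a) ∧
    StrictAntiOn (gfun G a) (Set.Icc 0 a) ∧
    gfun G a a = 0 ∧
    gfun G a 0 = thetaA G a ∧
    (∃ y : ℝ → ℝ,
      ContinuousOn y (Set.Icc 0 (thetaA G a)) ∧
      StrictAntiOn y (Set.Icc 0 (thetaA G a)) ∧
      Set.MapsTo y (Set.Icc 0 (thetaA G a)) (Set.Icc 0 a) ∧
      (∀ t ∈ Set.Icc 0 a, y (gfun G a t) = t) ∧
      (∀ s ∈ Set.Icc 0 (thetaA G a), gfun G a (y s) = s) ∧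
      y 0 = a ∧ y (thetaA G a) = 0 ∧
      (∀ s ∈ Set.Ico 0 (thetaA G a), 0 < y s) ∧
      (∀ s ∈ Set.Ioo 0 (thetaA G a), HasDerivAt y (-Real.sqrt (Ha G a (y s))) s)) := by
  have hg := hG.isGSolution ha
  obtain ⟨c, hc, hle⟩ := hg.exists_mul_le_Ha hp.le ha
  have hHa : ∀ w ∈ Ioo 0 a, 0 < Ha G a w := fun w hw ↦
    (mul_pos hc (mul_pos hw.1 (sub_pos.2 hw.2))).trans_le (hle w hw)
  have hf : ContinuousOn (fun w ↦ (√(Ha G a w))⁻¹) (Ioo 0 a) :=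
    (hg.continuousOn_Ha ha).sqrt.inv₀ fun w hw ↦ (sqrt_pos.2 (hHa w hw)).ne'
  have hfpos : ∀ w ∈ Ioo 0 a, 0 < (√(Ha G a w))⁻¹ := fun w hw ↦ by
    simpa using hHa w hw
  have hint := integrableOn_inv_sqrt_of_mul_le ha hc (hg.continuousOn_Ha ha) hle
  have hcont : ContinuousOn (gfun G a) (Icc 0 a) := continuousOn_setIntegral_Ioo_left ha.le hint
  have hanti : StrictAntiOn (gfun G a) (Icc 0 a) :=
    strictAntiOn_setIntegral_Ioo_left ha.le hf hfpos hint
  have hga : gfun G a a = 0 := by simp [gfun]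
  obtain ⟨y, hyc, hya, hym, hyl, hyr⟩ := hanti.exists_invOn_Icc ha.le hcont
  rw [hga] at hyc hya hym hyr
  have hθ : 0 < thetaA G a := hga ▸ hanti (left_mem_Icc.2 ha.le) (right_mem_Icc.2 ha.le) ha
  have hy0 : y 0 = a := by simpa [hga] using hyl a (right_mem_Icc.2 ha.le)
  have hyθ : y (thetaA G a) = 0 := hyl 0 (left_mem_Icc.2 ha.le)
  have hypos : ∀ s ∈ Ico 0 (thetaA G a), 0 < y s := fun s hs ↦
    hyθ ▸ hya ⟨hs.1, hs.2.le⟩ (right_mem_Icc.2 hθ.le) hs.2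
  refine ⟨hint, hcont, hanti, hga, rfl, y, hyc, hya, hym, hyl, hyr, hy0, hyθ, hypos,
    fun s hs ↦ ?_⟩
  have hys : y s ∈ Ioo 0 a :=
    ⟨hypos s ⟨hs.1.le, hs.2⟩, hy0 ▸ hya (left_mem_Icc.2 hθ.le) ⟨hs.1.le, hs.2.le⟩ hs.1⟩
  have := (hasDerivAt_setIntegral_Ioo_left hf hint hys).of_local_left_inverse
    (hyc.continuousAt (Icc_mem_nhds hs.1 hs.2)) (neg_ne_zero.2 (hfpos _ hys).ne')
    (eventually_of_mem (Icc_mem_nhds hs.1 hs.2) hyr)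
  rwa [inv_neg, inv_inv] at this
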